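/- (No-cost baseline of a separable observable.) For a separable observable G^sep = ∑_{l,m} g_{lm} φ_l φ_l† ⊗ f_m f_m† with real coefficients g_{lm} and orthonormal basis {φ_l} of ℂ^n ⊗ ℂ^n, the no-cost baseline reduces to the post-selected form: Re⟨Ψ̃_0, G^sep Ψ_T⟩ = p_0 · Tr[ρ_RS^{V_0} H], where p_0 = Tr[ρ V_0† V_0], ρ_RS^{V_0} = (I_n ⊗ V_0) Ψ_RS(0) Ψ_RS(0)† (I_n ⊗ V_0†)/p_0, H = ½{G_0^sep, I_n ⊗ (V_0 V_0†)^{−1}} and G_0^sep = ∑_l g_{l0} φ_l φ_l†. -/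

import Mathlib

open Matrix Kronecker Finset

noncomputable section

/-- Tensor product of two vectors. -/
def tvec {α β : Type*} (x : α → ℂ) (y : β → ℂ) : α × β → ℂ :=
  fun q => x q.1 * y q.2

/-- Standard basis vector `f_m` of the environment `ℂ^(M+1)`. -/
def stdv (M : ℕ) (m : Fin (M + 1)) : Fin (M + 1) → ℂ :=
  fun k => if k = m then 1 else 0

variable {n M : ℕ}

/-- The final pure state `Ψ_T = ∑_{i,m} √p_i ψ_i ⊗ (V_m ψ_i) ⊗ f_m` of R+S+E. -/
def PsiT (ψ : Fin n → Fin n → ℂ) (p : Fin n → ℝ)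
    (V : Fin (M + 1) → Matrix (Fin n) (Fin n) ℂ) :
    (Fin n × Fin n) × Fin (M + 1) → ℂ :=
  ∑ i, ∑ m, ((Real.sqrt (p i) : ℂ) • tvec (tvec (ψ i) (V m *ᵥ ψ i)) (stdv M m))

/-- The unnormalized vector `Ψ̃_0 = ∑_i √p_i ψ_i ⊗ ((V_0†)⁻¹ ψ_i) ⊗ f_0`. -/
def PsiTilde0 (ψ : Fin n → Fin n → ℂ) (p : Fin n → ℝ)
    (V : Fin (M + 1) → Matrix (Fin n) (Fin n) ℂ) :
    (Fin n × Fin n) × Fin (M + 1) → ℂ :=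
  ∑ i, ((Real.sqrt (p i) : ℂ) • tvec (tvec (ψ i) ((((V 0)ᴴ)⁻¹) *ᵥ ψ i)) (stdv M 0))

/-- The initial density matrix `ρ = ∑_i p_i ψ_i ψ_i†` of the principal system S. -/
def rho (ψ : Fin n → Fin n → ℂ) (p : Fin n → ℝ) : Matrix (Fin n) (Fin n) ℂ :=
  ∑ i, ((p i : ℂ) • vecMulVec (ψ i) (star (ψ i)))

/-- Expectation value `⟨G⟩ = ⟨Ψ, G Ψ⟩` (its real part, which is all of it for Hermitian `G`). -/
def expval {ι : Type*} [Fintype ι] (G : Matrix ι ι ℂ) (Ψ : ι → ℂ) : ℝ :=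
  (star Ψ ⬝ᵥ (G *ᵥ Ψ)).re

/-- Variance `Var[G] = ⟨Ψ, G² Ψ⟩ − ⟨G⟩²`. -/
def variance {ι : Type*} [Fintype ι] (G : Matrix ι ι ℂ) (Ψ : ι → ℂ) : ℝ :=
  expval (G * G) Ψ - (expval G Ψ) ^ 2

/-- The survival activity `Ξ = Tr[ρ (V_0† V_0)⁻¹] − 1`. -/
def survivalActivity (ψ : Fin n → Fin n → ℂ) (p : Fin n → ℝ)
    (V : Fin (M + 1) → Matrix (Fin n) (Fin n) ℂ) : ℝ :=
  ((rho ψ p * ((V 0)ᴴ * V 0)⁻¹).trace).re - 1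


/-- The purified initial state `Ψ_RS(0) = ∑_i √p_i ψ_i ⊗ ψ_i` of R+S. -/
def PsiRS (ψ : Fin n → Fin n → ℂ) (p : Fin n → ℝ) : Fin n × Fin n → ℂ :=
  ∑ i, ((Real.sqrt (p i) : ℂ) • tvec (ψ i) (ψ i))

/-- A separable observable `G^sep = ∑_{l,m} g_{lm} φ_l φ_l† ⊗ f_m f_m†`. -/
def Gsep (M : ℕ) (φ : Fin (n * n) → Fin n × Fin n → ℂ) (g : Fin (n * n) → Fin (M + 1) → ℝ) :
    Matrix ((Fin n × Fin n) × Fin (M + 1)) ((Fin n × Fin n) × Fin (M + 1)) ℂ :=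
  ∑ l, ∑ m, ((g l m : ℂ) •
    (vecMulVec (φ l) (star (φ l)) ⊗ₖ vecMulVec (stdv M m) (star (stdv M m))))

/-- The conditional `m = 0` part `G_0^sep = ∑_l g_{l0} φ_l φ_l†`. -/
def Gsep0 (M : ℕ) (φ : Fin (n * n) → Fin n × Fin n → ℂ) (g : Fin (n * n) → Fin (M + 1) → ℝ) :
    Matrix (Fin n × Fin n) (Fin n × Fin n) ℂ :=
  ∑ l, ((g l 0 : ℂ) • vecMulVec (φ l) (star (φ l)))

/-- The no-jump probability `p_0 = Tr[ρ V_0† V_0]`. -/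
def noJumpProb (ψ : Fin n → Fin n → ℂ) (p : Fin n → ℝ)
    (V : Fin (M + 1) → Matrix (Fin n) (Fin n) ℂ) : ℝ :=
  ((rho ψ p * ((V 0)ᴴ * V 0)).trace).re

/-- The post-selected state `ρ_RS^{V_0} = (I ⊗ V_0) Ψ_RS Ψ_RS† (I ⊗ V_0†) / p_0`. -/
def rhoRSV0 (ψ : Fin n → Fin n → ℂ) (p : Fin n → ℝ)
    (V : Fin (M + 1) → Matrix (Fin n) (Fin n) ℂ) :
    Matrix (Fin n × Fin n) (Fin n × Fin n) ℂ :=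
  ((noJumpProb ψ p V : ℂ))⁻¹ •
    (((1 : Matrix (Fin n) (Fin n) ℂ) ⊗ₖ V 0) *
      vecMulVec (PsiRS ψ p) (star (PsiRS ψ p)) *
      ((1 : Matrix (Fin n) (Fin n) ℂ) ⊗ₖ (V 0)ᴴ))

/-- The Hermitian operator `H = ½{G_0^sep, I ⊗ (V_0 V_0†)⁻¹}`. -/
def Hop (M : ℕ) (φ : Fin (n * n) → Fin n × Fin n → ℂ) (g : Fin (n * n) → Fin (M + 1) → ℝ)
    (V : Fin (M + 1) → Matrix (Fin n) (Fin n) ℂ) :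
    Matrix (Fin n × Fin n) (Fin n × Fin n) ℂ :=
  (1 / 2 : ℂ) •
    (Gsep0 M φ g * ((1 : Matrix (Fin n) (Fin n) ℂ) ⊗ₖ (V 0 * (V 0)ᴴ)⁻¹) +
     ((1 : Matrix (Fin n) (Fin n) ℂ) ⊗ₖ (V 0 * (V 0)ᴴ)⁻¹) * Gsep0 M φ g)

/-- The no-cost baseline `Q_{G^sep} = p_0 Tr[ρ_RS^{V_0} H]`. -/
def Qsep (M : ℕ) (ψ : Fin n → Fin n → ℂ) (p : Fin n → ℝ)
    (φ : Fin (n * n) → Fin n × Fin n → ℂ) (g : Fin (n * n) → Fin (M + 1) → ℝ)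
    (V : Fin (M + 1) → Matrix (Fin n) (Fin n) ℂ) : ℝ :=
  noJumpProb ψ p V * ((rhoRSV0 ψ p V * Hop M φ g V).trace).re

/-!
Put `χ = (I ⊗ V₀) Ψ_RS(0)` and `K = I ⊗ (V₀ V₀†)⁻¹`. Since `K (I ⊗ V₀) = I ⊗ (V₀†)⁻¹`, the
vectors are `Ψ_T = ∑_m ((I ⊗ V_m) Ψ_RS(0)) ⊗ f_m` and `Ψ̃₀ = K χ ⊗ f₀`, and `G^sep` is block
diagonal in the environment basis, so `⟨Ψ̃₀, G^sep Ψ_T⟩ = ⟨K χ, G₀^sep χ⟩`. As `G₀^sep` and `K`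
are Hermitian, the real part of this is `½ (⟨χ, G₀^sep K χ⟩ + ⟨χ, K G₀^sep χ⟩) = Tr[χ χ† H]`,
and `χ χ† = p₀ ρ_RS^{V₀}`.
-/

section TensorVectors

variable {α α' β β' : Type*}

lemma tvec_smul_left (c : ℂ) (x : α → ℂ) (y : β → ℂ) : tvec (c • x) y = c • tvec x y := by
  funext q
  simp only [tvec, Pi.smul_apply, smul_eq_mul, mul_assoc]

lemma tvec_sum_left {ι : Type*} (s : Finset ι) (x : ι → α → ℂ) (y : β → ℂ) :
    tvec (∑ i ∈ s, x i) y = ∑ i ∈ s, tvec (x i) y := by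
  funext q
  simp only [tvec, Finset.sum_apply, Finset.sum_mul]

lemma tvec_zero_right (x : α → ℂ) : tvec x (0 : β → ℂ) = 0 := by
  funext q
  simp [tvec]

lemma star_tvec_dotProduct_tvec [Fintype α] [Fintype β] (a c : α → ℂ) (b d : β → ℂ) :
    star (tvec a b) ⬝ᵥ tvec c d = (star a ⬝ᵥ c) * (star b ⬝ᵥ d) := by
  simp only [dotProduct, Pi.star_apply, tvec, star_mul', Fintype.sum_prod_type,
    Finset.sum_mul_sum]
  exact Finset.sum_congr rfl fun _ _ => Finset.sum_congr rfl fun _ _ => by ring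

lemma kronecker_mulVec_tvec [Fintype α] [Fintype β] (P : Matrix α' α ℂ) (Q : Matrix β' β ℂ)
    (a : α → ℂ) (b : β → ℂ) : (P ⊗ₖ Q) *ᵥ tvec a b = tvec (P *ᵥ a) (Q *ᵥ b) := by
  funext q
  simp only [mulVec, dotProduct, tvec, kroneckerMap_apply, Fintype.sum_prod_type,
    Finset.sum_mul_sum]
  exact Finset.sum_congr rfl fun _ _ => Finset.sum_congr rfl fun _ _ => by ring

end TensorVectors

lemma Matrix.IsHermitian.star_mulVec_dotProduct {R ι : Type*} [CommSemiring R] [StarRing R]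
    [Fintype ι] {A : Matrix ι ι R} (hA : A.IsHermitian) (x y : ι → R) :
    star (A *ᵥ x) ⬝ᵥ y = star x ⬝ᵥ (A *ᵥ y) := by
  rw [star_mulVec, hA.eq, dotProduct_mulVec]

lemma trace_vecMulVec_star_mul {R ι : Type*} [CommSemiring R] [StarRing R] [Fintype ι]
    (x : ι → R) (B : Matrix ι ι R) :
    (vecMulVec x (star x) * B).trace = star x ⬝ᵥ (B *ᵥ x) := by
  rw [vecMulVec_mul, trace_vecMulVec, dotProduct_comm, dotProduct_mulVec]

lemma re_star_mulVec_dotProduct_eq_trace_anticommutator {ι : Type*} [Fintype ι]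
    {A K : Matrix ι ι ℂ} (hA : A.IsHermitian) (hK : K.IsHermitian) (x : ι → ℂ) :
    ((star (K *ᵥ x) ⬝ᵥ (A *ᵥ x)).re : ℂ)
      = (vecMulVec x (star x) * ((1 / 2 : ℂ) • (A * K + K * A))).trace := by
  set z := star (K *ᵥ x) ⬝ᵥ (A *ᵥ x)
  have hAK : star x ⬝ᵥ ((A * K) *ᵥ x) = star z := by
    rw [← mulVec_mulVec, ← hA.star_mulVec_dotProduct, star_dotProduct]
  have hKA : star x ⬝ᵥ ((K * A) *ᵥ x) = z := by
    rw [← mulVec_mulVec, ← hK.star_mulVec_dotProduct]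
  rw [trace_vecMulVec_star_mul, smul_mulVec, add_mulVec, dotProduct_smul, dotProduct_add, hAK,
    hKA, Complex.re_eq_add_conj, smul_eq_mul, Complex.star_def]
  ring

lemma one_kronecker_inv_mul_conjTranspose_isHermitian {R ι κ : Type*} [CommRing R] [StarRing R]
    [Fintype ι] [DecidableEq ι] [DecidableEq κ] (A : Matrix ι ι R) :
    ((1 : Matrix κ κ R) ⊗ₖ (A * Aᴴ)⁻¹).IsHermitian := by
  rw [IsHermitian, conjTranspose_kronecker, conjTranspose_one,
    (isHermitian_mul_conjTranspose_self A).inv.eq]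

lemma inv_mul_conjTranspose_mul_self {R ι : Type*} [CommRing R] [StarRing R] [Fintype ι]
    [DecidableEq ι] {A : Matrix ι ι R} (hA : IsUnit A) : (A * Aᴴ)⁻¹ * A = (Aᴴ)⁻¹ := by
  rw [Matrix.mul_inv_rev, Matrix.mul_assoc, Matrix.nonsing_inv_mul _
    ((isUnit_iff_isUnit_det A).mp hA), Matrix.mul_one]

lemma star_stdv_dotProduct_stdv (a b : Fin (M + 1)) :
    star (stdv M a) ⬝ᵥ stdv M b = if a = b then 1 else 0 := by
  simp [stdv, dotProduct, apply_ite, eq_comm]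

lemma vecMulVec_stdv_mulVec_stdv (a b : Fin (M + 1)) :
    vecMulVec (stdv M a) (star (stdv M a)) *ᵥ stdv M b = if a = b then stdv M a else 0 := by
  rw [vecMulVec_mulVec, op_smul_eq_smul, star_stdv_dotProduct_stdv]
  split_ifs <;> simp

/-- `Gsep0 M φ g` is `GsepBlock M φ g 0` by definition. -/
def GsepBlock (M : ℕ) (φ : Fin (n * n) → Fin n × Fin n → ℂ)
    (g : Fin (n * n) → Fin (M + 1) → ℝ) (m : Fin (M + 1)) :
    Matrix (Fin n × Fin n) (Fin n × Fin n) ℂ :=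
  ∑ l, ((g l m : ℂ) • vecMulVec (φ l) (star (φ l)))

open scoped ComplexOrder in
lemma GsepBlock_isHermitian (φ : Fin (n * n) → Fin n × Fin n → ℂ)
    (g : Fin (n * n) → Fin (M + 1) → ℝ) (m : Fin (M + 1)) : (GsepBlock M φ g m).IsHermitian :=
  isSelfAdjoint_sum _ fun l _ =>
    (posSemidef_vecMulVec_self_star (φ l)).isHermitian.smul (Complex.conj_ofReal (g l m))

lemma Gsep_mulVec_tvec_stdv (φ : Fin (n * n) → Fin n × Fin n → ℂ)
    (g : Fin (n * n) → Fin (M + 1) → ℝ) (b : Fin n × Fin n → ℂ) (m : Fin (M + 1)) :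
    Gsep M φ g *ᵥ tvec b (stdv M m) = tvec (GsepBlock M φ g m *ᵥ b) (stdv M m) := by
  simp only [Gsep, GsepBlock, sum_mulVec, smul_mulVec, kronecker_mulVec_tvec,
    vecMulVec_stdv_mulVec_stdv, apply_ite, tvec_zero_right, smul_zero, Finset.sum_ite_eq',
    Finset.mem_univ, if_true, tvec_sum_left, tvec_smul_left]

section States

variable (ψ : Fin n → Fin n → ℂ) (p : Fin n → ℝ) (V : Fin (M + 1) → Matrix (Fin n) (Fin n) ℂ)

lemma one_kronecker_mulVec_PsiRS (Q : Matrix (Fin n) (Fin n) ℂ) :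
    ((1 : Matrix (Fin n) (Fin n) ℂ) ⊗ₖ Q) *ᵥ PsiRS ψ p
      = ∑ i, (Real.sqrt (p i) : ℂ) • tvec (ψ i) (Q *ᵥ ψ i) := by
  simp only [PsiRS, mulVec_sum, mulVec_smul, kronecker_mulVec_tvec, one_mulVec]

lemma PsiT_eq_sum_tvec :
    PsiT ψ p V = ∑ m, tvec (((1 : Matrix (Fin n) (Fin n) ℂ) ⊗ₖ V m) *ᵥ PsiRS ψ p) (stdv M m) := by
  simp only [PsiT, one_kronecker_mulVec_PsiRS, tvec_sum_left, tvec_smul_left]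
  exact Finset.sum_comm

lemma PsiTilde0_eq_tvec :
    PsiTilde0 ψ p V
      = tvec (((1 : Matrix (Fin n) (Fin n) ℂ) ⊗ₖ ((V 0)ᴴ)⁻¹) *ᵥ PsiRS ψ p) (stdv M 0) := by
  simp only [PsiTilde0, one_kronecker_mulVec_PsiRS, tvec_sum_left, tvec_smul_left]

/-- Only the `m = 0` branch of `Ψ_T` survives the overlap with `Ψ̃_0`, since `G^sep` does not
mix environment outcomes. -/
lemma star_PsiTilde0_dotProduct_Gsep_mulVec_PsiT (φ : Fin (n * n) → Fin n × Fin n → ℂ)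
    (g : Fin (n * n) → Fin (M + 1) → ℝ) :
    star (PsiTilde0 ψ p V) ⬝ᵥ (Gsep M φ g *ᵥ PsiT ψ p V)
      = star (((1 : Matrix (Fin n) (Fin n) ℂ) ⊗ₖ ((V 0)ᴴ)⁻¹) *ᵥ PsiRS ψ p) ⬝ᵥ
          (Gsep0 M φ g *ᵥ (((1 : Matrix (Fin n) (Fin n) ℂ) ⊗ₖ V 0) *ᵥ PsiRS ψ p)) := by
  simp only [PsiTilde0_eq_tvec, PsiT_eq_sum_tvec, mulVec_sum, Gsep_mulVec_tvec_stdv,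
    dotProduct_sum, star_tvec_dotProduct_tvec, star_stdv_dotProduct_stdv, mul_ite, mul_one,
    mul_zero, Finset.sum_ite_eq, Finset.mem_univ, if_true]
  rfl

lemma rhoRSV0_eq_smul_vecMulVec :
    rhoRSV0 ψ p V = ((noJumpProb ψ p V : ℂ))⁻¹ •
      vecMulVec (((1 : Matrix (Fin n) (Fin n) ℂ) ⊗ₖ V 0) *ᵥ PsiRS ψ p)
        (star (((1 : Matrix (Fin n) (Fin n) ℂ) ⊗ₖ V 0) *ᵥ PsiRS ψ p)) := by
  rw [rhoRSV0, mul_vecMulVec, vecMulVec_mul, star_mulVec, conjTranspose_kronecker,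
    conjTranspose_one]

end States

theorem separable_no_cost_baseline_general
    (ψ : Fin n → Fin n → ℂ)
    (p : Fin n → ℝ)
    (V : Fin (M + 1) → Matrix (Fin n) (Fin n) ℂ)
    (hV0 : IsUnit (V 0))
    (hp0 : 0 < noJumpProb ψ p V)
    (φ : Fin (n * n) → Fin n × Fin n → ℂ)
    (g : Fin (n * n) → Fin (M + 1) → ℝ) :
    (star (PsiTilde0 ψ p V) ⬝ᵥ (Gsep M φ g *ᵥ PsiT ψ p V)).re
      = noJumpProb ψ p V * ((rhoRSV0 ψ p V * Hop M φ g V).trace).re := by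
  rw [star_PsiTilde0_dotProduct_Gsep_mulVec_PsiT, rhoRSV0_eq_smul_vecMulVec, Matrix.smul_mul,
    trace_smul, smul_eq_mul, Hop]
  set χ := ((1 : Matrix (Fin n) (Fin n) ℂ) ⊗ₖ V 0) *ᵥ PsiRS ψ p
  have hK : ((1 : Matrix (Fin n) (Fin n) ℂ) ⊗ₖ (V 0 * (V 0)ᴴ)⁻¹) *ᵥ χ
      = ((1 : Matrix (Fin n) (Fin n) ℂ) ⊗ₖ ((V 0)ᴴ)⁻¹) *ᵥ PsiRS ψ p := by
    rw [mulVec_mulVec, ← mul_kronecker_mul, Matrix.one_mul, inv_mul_conjTranspose_mul_self hV0]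
  rw [← hK, ← re_star_mulVec_dotProduct_eq_trace_anticommutator (A := Gsep0 M φ g)
    (GsepBlock_isHermitian φ g 0) (one_kronecker_inv_mul_conjTranspose_isHermitian (V 0)) χ,
    ← Complex.ofReal_inv, ← Complex.ofReal_mul, Complex.ofReal_re, mul_inv_cancel_left₀ hp0.ne']

/-- **No-cost baseline of a separable observable.** For a separable observable
`G^sep = ∑_{l,m} g_{lm} φ_l φ_l† ⊗ f_m f_m†`, the no-cost baseline `Re⟨Ψ̃_0, G^sep Ψ_T⟩`
reduces to the post-selected form `p_0 Tr[ρ_RS^{V_0} H]`. -/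
theorem separable_no_cost_baseline
    (ψ : Fin n → Fin n → ℂ)
    (hortho : ∀ i j, star (ψ i) ⬝ᵥ ψ j = if i = j then (1 : ℂ) else 0)
    (p : Fin n → ℝ) (hp : ∀ i, 0 ≤ p i) (hp1 : ∑ i, p i = 1)
    (V : Fin (M + 1) → Matrix (Fin n) (Fin n) ℂ)
    (hKraus : ∑ m, (V m)ᴴ * V m = 1)
    (hV0 : IsUnit (V 0))
    (hp0 : 0 < noJumpProb ψ p V)
    (φ : Fin (n * n) → Fin n × Fin n → ℂ)
    (hφ : ∀ l l', star (φ l) ⬝ᵥ φ l' = if l = l' then (1 : ℂ) else 0)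
    (g : Fin (n * n) → Fin (M + 1) → ℝ) :
    (star (PsiTilde0 ψ p V) ⬝ᵥ (Gsep M φ g *ᵥ PsiT ψ p V)).re
      = noJumpProb ψ p V * ((rhoRSV0 ψ p V * Hop M φ g V).trace).re :=
  separable_no_cost_baseline_general ψ p V hV0 hp0 φ g
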